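/- A semigroup S is (3)-sofic if and only if there exist a sofic group G and an injective multiplicative homomorphism S → G. -/

import Mathlib

/-- Normalized Hamming distance between two self-maps of a (finite) type. -/
noncomputable def dHam {X : Type} (f g : X → X) : ℝ :=
  (({x : X | f x ≠ g x}).ncard : ℝ) / (Nat.card X)

/-- A `(K, ε)`-action of a semigroup `S` on a type `X` (intended finite and nonempty).
Since a semigroup need not have an identity, there is no identity condition. -/
def IsKEActionSemigroup {S : Type*} [Semigroup S] (K : Finset S) (ε : ℝ) {X : Type}
    (ψ : S → X → X) : Prop :=
  (∀ s ∈ K, ∀ t ∈ K, s * t ∈ K → dHam (ψ (s * t)) (ψ s ∘ ψ t) ≤ ε) ∧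
  (∀ s ∈ K, ∀ t ∈ K, s ≠ t → 1 - ε ≤ dHam (ψ s) (ψ t))

/-- A `(K, ε)`-action of a monoid (in particular, of a group) `M` on a type `X`,
including the condition that the identity acts approximately as `id`. -/
def IsKEAction {M : Type*} [Monoid M] (K : Finset M) (ε : ℝ) {X : Type}
    (ψ : M → X → X) : Prop :=
  (∀ s ∈ K, ∀ t ∈ K, s * t ∈ K → dHam (ψ (s * t)) (ψ s ∘ ψ t) ≤ ε) ∧
  ((1 : M) ∈ K → dHam (ψ 1) id ≤ ε) ∧
  (∀ s ∈ K, ∀ t ∈ K, s ≠ t → 1 - ε ≤ dHam (ψ s) (ψ t))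

/-- A group is sofic if for every finite `K ⊆ G` and every `ε > 0` it admits a
`(K, ε)`-action on some nonempty finite set. -/
def IsSoficGroup (G : Type*) [Group G] : Prop :=
  ∀ (K : Finset G) (ε : ℝ), 0 < ε →
    ∃ (X : Type), Finite X ∧ Nonempty X ∧ ∃ ψ : G → X → X, IsKEAction K ε ψ

/-- A semigroup is (3)-sofic if for every finite `K ⊆ S` and every `ε > 0` it admits a
`(K, ε)`-action on some nonempty finite set `X` such that the uniform probability
measure on `X` is approximately invariant: for every `s ∈ K` and every `E ⊆ X`,
`| |E| - |ψ(s)⁻¹(E)| | ≤ ε * |X|`. -/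
def IsSofic3Semigroup (S : Type*) [Semigroup S] : Prop :=
  ∀ (K : Finset S) (ε : ℝ), 0 < ε →
    ∃ (X : Type), Finite X ∧ Nonempty X ∧ ∃ ψ : S → X → X, IsKEActionSemigroup K ε ψ ∧
      ∀ s ∈ K, ∀ E : Set X,
        |(E.ncard : ℝ) - ((ψ s ⁻¹' E).ncard : ℝ)| ≤ ε * (Nat.card X : ℝ)

/-!
A `(K, ε)`-action of a sofic group lets every element act almost invertibly (`ψ g⁻¹` is almost
inverse to `ψ g`), and an almost invertible map almost preserves cardinalities; restricting to the
image of `S` therefore gives the approximately invariant actions of a (3)-sofic semigroup.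

Conversely, approximate invariance applied to the complement of the range shows that each `ψ s` is
almost surjective, hence close to a permutation. Taking such permutation models of `S` for all
`(K, 1 / (n + 1))` and passing to the metric ultraproduct of the finite symmetric groups (with the
normalized Hamming distance) along an ultrafilter refining `atTop` embeds `S` into a group, which is
sofic because distinct elements remain uniformly separated there and separation can be amplified
by letting the group act coordinatewise on powers `Fin m → X`.
-/

open Function Set Filter Topology

section Hamming

variable {X : Type}

theorem dHam_self (f : X → X) : dHam f f = 0 := by
  simp [dHam]

theorem dHam_nonneg (f g : X → X) : 0 ≤ dHam f g := by
  unfold dHam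
  positivity

theorem dHam_comm (f g : X → X) : dHam f g = dHam g f := by
  simp only [dHam, ne_comm]

theorem dHam_comp_equiv (f g : X → X) (e : X ≃ X) : dHam (f ∘ e) (g ∘ e) = dHam f g := by
  have hpre : {x | f (e x) ≠ g (e x)} = e ⁻¹' {x | f x ≠ g x} := rfl
  have hrange : {x | f x ≠ g x} ⊆ range e := e.surjective.range_eq ▸ subset_univ _
  simp only [dHam, comp_apply, hpre,
    Set.ncard_preimage_of_injective_subset_range e.injective hrange]

variable [Finite X]

theorem dHam_mul_card (f g : X → X) :
    dHam f g * Nat.card X = ({x | f x ≠ g x}.ncard : ℝ) := by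
  rcases isEmpty_or_nonempty X with hX | hX
  · simp [Set.eq_empty_of_isEmpty]
  · exact div_mul_cancel₀ _ (Nat.cast_ne_zero.2 Nat.card_pos.ne')

theorem dHam_le_one (f g : X → X) : dHam f g ≤ 1 := by
  unfold dHam
  exact div_le_one_of_le₀ (by exact_mod_cast Set.ncard_le_card _) (by positivity)

theorem one_sub_dHam [Nonempty X] (f g : X → X) :
    1 - dHam f g = ({x | f x = g x}.ncard : ℝ) / Nat.card X := by
  have hN : (Nat.card X : ℝ) ≠ 0 := Nat.cast_ne_zero.2 Nat.card_pos.ne'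
  have h := Set.ncard_add_ncard_compl {x | f x = g x}
  rw [dHam, eq_div_iff hN, sub_mul, div_mul_cancel₀ _ hN, ← h]
  push_cast
  rw [← Set.compl_ofPred]
  ring

theorem dHam_triangle (f g h : X → X) : dHam f h ≤ dHam f g + dHam g h := by
  have hsub : {x | f x ≠ h x} ⊆ {x | f x ≠ g x} ∪ {x | g x ≠ h x} := fun x hx => by
    by_cases hfg : f x = g x
    · exact Or.inr fun hgh => hx (hfg.trans hgh)
    · exact Or.inl hfg
  have hcard : ({x | f x ≠ h x}.ncard : ℝ) ≤ {x | f x ≠ g x}.ncard + {x | g x ≠ h x}.ncard := by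
    exact_mod_cast (Set.ncard_le_ncard hsub).trans (Set.ncard_union_le _ _)
  simp only [dHam, ← add_div]
  gcongr

theorem dHam_comp_left_le (u f g : X → X) : dHam (u ∘ f) (u ∘ g) ≤ dHam f g := by
  have hsub : {x | u (f x) ≠ u (g x)} ⊆ {x | f x ≠ g x} := fun x hx hfg => hx (by rw [hfg])
  exact div_le_div_of_nonneg_right (by exact_mod_cast Set.ncard_le_ncard hsub) (Nat.cast_nonneg _)

theorem dHam_comp_le (a b c : X → X) (e : X ≃ X) :
    dHam (a ∘ c) (b ∘ e) ≤ dHam a b + dHam c e := by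
  have h := dHam_triangle (a ∘ c) (a ∘ e) (b ∘ e)
  rw [dHam_comp_equiv] at h
  linarith [dHam_comp_left_le a c e]

end Hamming

section Amplification

variable {X : Type} [Finite X] [Nonempty X] (ι : Type) [Fintype ι]

theorem one_sub_dHam_pi (f g : X → X) :
    1 - dHam (fun v : ι → X => f ∘ v) (fun v => g ∘ v) = (1 - dHam f g) ^ Fintype.card ι := by
  have hagree : {v : ι → X | f ∘ v = g ∘ v}.ncard = {x | f x = g x}.ncard ^ Fintype.card ι := by
    rw [← Nat.card_coe_set_eq, ← Nat.card_coe_set_eq, ← Nat.card_eq_fintype_card,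
      ← Nat.card_fun]
    exact Nat.card_congr ((Equiv.subtypeEquivRight fun v => funext_iff).trans
      (Equiv.subtypePiEquivPi (p := fun _ x => f x = g x)))
  rw [one_sub_dHam, one_sub_dHam, div_pow, hagree, Nat.card_fun, Nat.card_eq_fintype_card (α := ι)]
  push_cast
  rfl

theorem dHam_pi_le (f g : X → X) :
    dHam (fun v : ι → X => f ∘ v) (fun v => g ∘ v) ≤ Fintype.card ι * dHam f g := by
  have hd := dHam_le_one f g
  have hbern := one_add_mul_le_pow (a := -dHam f g) (by linarith) (Fintype.card ι)
  rw [← sub_eq_add_neg] at hbern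
  linarith [one_sub_dHam_pi ι f g]

theorem le_dHam_pi {f g : X → X} {δ : ℝ} (hδ : δ ≤ dHam f g) :
    1 - (1 - δ) ^ Fintype.card ι ≤ dHam (fun v : ι → X => f ∘ v) (fun v => g ∘ v) := by
  have hpow : (1 - dHam f g) ^ Fintype.card ι ≤ (1 - δ) ^ Fintype.card ι :=
    pow_le_pow_left₀ (by linarith [dHam_le_one f g]) (by linarith) _
  linarith [one_sub_dHam_pi ι f g]

theorem isKEAction_pi {M : Type*} [Monoid M] {K : Finset M} {ψ : M → X → X} {ε δ η : ℝ}
    (hmul : ∀ s ∈ K, ∀ t ∈ K, s * t ∈ K → dHam (ψ (s * t)) (ψ s ∘ ψ t) ≤ η)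
    (hone : (1 : M) ∈ K → dHam (ψ 1) id ≤ η)
    (hsep : ∀ s ∈ K, ∀ t ∈ K, s ≠ t → δ ≤ dHam (ψ s) (ψ t))
    (hη : Fintype.card ι * η ≤ ε) (hδ : (1 - δ) ^ Fintype.card ι ≤ ε) :
    IsKEAction K ε (fun s (v : ι → X) => ψ s ∘ v) := by
  have hcard : (0 : ℝ) ≤ Fintype.card ι := Nat.cast_nonneg _
  refine ⟨fun s hs t ht hst => ?_, fun h1 => ?_, fun s hs t ht hst => ?_⟩
  · calc _ ≤ Fintype.card ι * dHam (ψ (s * t)) (ψ s ∘ ψ t) := dHam_pi_le ι _ _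
      _ ≤ ε := (mul_le_mul_of_nonneg_left (hmul s hs t ht hst) hcard).trans hη
  · calc _ ≤ Fintype.card ι * dHam (ψ 1) id := dHam_pi_le ι (ψ 1) id
      _ ≤ ε := (mul_le_mul_of_nonneg_left (hone h1) hcard).trans hη
  · linarith [le_dHam_pi ι (hsep s hs t ht hst)]

end Amplification

/-- Passing to `Fin m → X` replaces the separation `δ` by `1 - (1 - δ) ^ m` at the cost of
multiplying the other errors by `m`. -/
theorem isSoficGroup_of_separated {G : Type*} [Group G]
    (h : ∀ K : Finset G, ∃ δ > 0, ∀ η > 0, ∃ (X : Type), Finite X ∧ Nonempty X ∧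
      ∃ ψ : G → X → X,
        (∀ s ∈ K, ∀ t ∈ K, s * t ∈ K → dHam (ψ (s * t)) (ψ s ∘ ψ t) ≤ η) ∧
        ((1 : G) ∈ K → dHam (ψ 1) id ≤ η) ∧
        (∀ s ∈ K, ∀ t ∈ K, s ≠ t → δ ≤ dHam (ψ s) (ψ t))) :
    IsSoficGroup G := by
  intro K ε hε
  obtain ⟨δ, hδ, hK⟩ := h K
  obtain ⟨m, hm⟩ := exists_pow_lt_of_lt_one hε (sub_lt_self 1 hδ)
  obtain ⟨X, _, _, ψ, hmul, hone, hsep⟩ := hK (ε / (m + 1)) (by positivity)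
  refine ⟨Fin m → X, inferInstance, inferInstance, _,
    isKEAction_pi (Fin m) hmul hone hsep ?_ (by rw [Fintype.card_fin]; exact hm.le)⟩
  rw [Fintype.card_fin, mul_div_assoc', div_le_iff₀ (by positivity)]
  nlinarith

theorem ncard_le_ncard_add_ncard_compl_of_injOn {α β : Type*} [Finite α] [Finite β] {w : α → β}
    {A P : Set α} {Q : Set β} (hw : InjOn w A) (hPQ : MapsTo w (P ∩ A) Q) :
    P.ncard ≤ Q.ncard + Aᶜ.ncard :=
  calc P.ncard = (P ∩ A).ncard + (P \ A).ncard :=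
        (Set.ncard_inter_add_ncard_sdiff_eq_ncard P A).symm
    _ ≤ Q.ncard + Aᶜ.ncard :=
        add_le_add (Set.ncard_le_ncard_of_injOn w hPQ (hw.mono inter_subset_right))
          (Set.ncard_le_ncard (sdiff_subset_compl P A))

theorem abs_ncard_sub_ncard_preimage_le {X : Type} [Finite X] {u v : X → X} {δ : ℝ}
    (hvu : dHam (v ∘ u) id ≤ δ) (huv : dHam (u ∘ v) id ≤ δ) (E : Set X) :
    |(E.ncard : ℝ) - (u ⁻¹' E).ncard| ≤ δ * Nat.card X := by
  have hN : (0 : ℝ) ≤ Nat.card X := Nat.cast_nonneg _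
  have h1 : ((u ⁻¹' E).ncard : ℝ) ≤ E.ncard + {x | v (u x) = x}ᶜ.ncard := by
    exact_mod_cast ncard_le_ncard_add_ncard_compl_of_injOn
      (fun x hx y hy hxy => (hx : v (u x) = x).symm.trans ((congrArg v hxy).trans hy))
      (fun x hx => hx.1)
  have h2 : (E.ncard : ℝ) ≤ (u ⁻¹' E).ncard + {x | u (v x) = x}ᶜ.ncard := by
    exact_mod_cast ncard_le_ncard_add_ncard_compl_of_injOn
      (fun x hx y hy hxy => (hx : u (v x) = x).symm.trans ((congrArg u hxy).trans hy))
      (fun x hx => show u (v x) ∈ E by rw [(hx.2 : u (v x) = x)]; exact hx.1)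
  have e1 : dHam (v ∘ u) id * Nat.card X = ({x | v (u x) = x}ᶜ.ncard : ℝ) := dHam_mul_card _ _
  have e2 : dHam (u ∘ v) id * Nat.card X = ({x | u (v x) = x}ᶜ.ncard : ℝ) := dHam_mul_card _ _
  rw [abs_le]
  constructor
  · linarith [mul_le_mul_of_nonneg_right hvu hN]
  · linarith [mul_le_mul_of_nonneg_right huv hN]

theorem IsKEAction.dHam_comp_le_of_mul_eq_one {M : Type*} [Monoid M] {K : Finset M} {ε : ℝ}
    {X : Type} [Finite X] {ψ : M → X → X} (hψ : IsKEAction K ε ψ) (h1 : (1 : M) ∈ K) {g h : M}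
    (hg : g ∈ K) (hh : h ∈ K) (hgh : g * h = 1) : dHam (ψ g ∘ ψ h) id ≤ 2 * ε := by
  have hprod := hψ.1 g hg h hh (hgh ▸ h1)
  rw [hgh, dHam_comm] at hprod
  linarith [dHam_triangle (ψ g ∘ ψ h) (ψ 1) id, hψ.2.1 h1]

theorem IsSoficGroup.isSofic3Semigroup_of_injective {S G : Type*} [Semigroup S] [Group G]
    (hG : IsSoficGroup G) (f : S →ₙ* G) (hf : Injective f) : IsSofic3Semigroup S := by
  classical
  intro K ε hε
  set L := insert 1 (K.image f ∪ K.image fun s => (f s)⁻¹)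
  have h1 : (1 : G) ∈ L := Finset.mem_insert_self _ _
  have hL : ∀ s ∈ K, f s ∈ L ∧ (f s)⁻¹ ∈ L := by
    intro s hs
    simp only [L, Finset.mem_insert, Finset.mem_union, Finset.mem_image]
    exact ⟨Or.inr (Or.inl ⟨s, hs, rfl⟩), Or.inr (Or.inr ⟨s, hs, rfl⟩)⟩
  obtain ⟨X, hX, hXne, ψ, hψ⟩ := hG L (ε / 2) (by positivity)
  refine ⟨X, hX, hXne, fun s => ψ (f s),
    ⟨fun s hs t ht hst => ?_, fun s hs t ht hst => ?_⟩, fun s hs E => ?_⟩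
  · have := hψ.1 _ (hL s hs).1 _ (hL t ht).1 (map_mul f s t ▸ (hL _ hst).1)
    simp only [map_mul]
    linarith
  · linarith [hψ.2.2 _ (hL s hs).1 _ (hL t ht).1 (hf.ne hst)]
  · have := abs_ncard_sub_ncard_preimage_le
      (hψ.dHam_comp_le_of_mul_eq_one h1 (hL s hs).2 (hL s hs).1 (inv_mul_cancel _))
      (hψ.dHam_comp_le_of_mul_eq_one h1 (hL s hs).1 (hL s hs).2 (mul_inv_cancel _)) E
    rwa [mul_div_cancel₀ _ two_ne_zero] at this

theorem exists_perm_ncard_ne_le {X : Type} [Finite X] (f : X → X) :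
    ∃ e : Equiv.Perm X, {x | f x ≠ e x}.ncard ≤ (range f)ᶜ.ncard := by
  cases nonempty_fintype X
  obtain ⟨A, hA, hinj⟩ := Set.exists_image_eq_and_injOn univ f
  obtain ⟨g, hg⟩ := Set.MapsTo.exists_equiv_extend_of_card_eq (t := Finset.univ)
    Finset.card_univ.symm (fun x _ => Finset.mem_coe.2 (Finset.mem_univ (f x))) hinj
  refine ⟨g.trans (Equiv.subtypeUnivEquiv Finset.mem_univ), ?_⟩
  have hsub : {x | f x ≠ g x} ⊆ Aᶜ := fun x hx hxA => hx (hg x hxA).symm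
  have hA_card : A.ncard = (range f).ncard := by
    rw [← hinj.ncard_image, hA, image_univ]
  have := Set.ncard_add_ncard_compl A
  have := Set.ncard_add_ncard_compl (range f)
  exact (Set.ncard_le_ncard hsub).trans (by omega)

theorem IsKEActionSemigroup.of_dHam_le_perm {S : Type*} [Semigroup S] {K : Finset S} {ε η : ℝ}
    {X : Type} [Finite X] {ψ : S → X → X} (hψ : IsKEActionSemigroup K ε ψ)
    {π : S → Equiv.Perm X} (hπ : ∀ s ∈ K, dHam (ψ s) (π s) ≤ η) :
    IsKEActionSemigroup K (ε + 3 * η) (fun s => π s) := by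
  refine ⟨fun s hs t ht hst => ?_, fun s hs t ht hst => ?_⟩
  · have h1 := dHam_triangle (π (s * t)) (ψ (s * t)) (π s ∘ π t)
    have h2 := dHam_triangle (ψ (s * t)) (ψ s ∘ ψ t) (π s ∘ π t)
    linarith [dHam_comp_le (ψ s) (π s) (ψ t) (π t), hψ.1 s hs t ht hst, hπ s hs, hπ t ht,
      hπ _ hst, dHam_comm (π (s * t)) (ψ (s * t))]
  · show 1 - (ε + 3 * η) ≤ dHam (π s) (π t)
    have h1 := dHam_triangle (ψ s) (π s) (ψ t)
    have h2 := dHam_triangle (π s) (π t) (ψ t)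
    linarith [hψ.2 s hs t ht hst, hπ s hs, hπ t ht, dHam_comm (π t) (ψ t),
      dHam_nonneg (ψ s) (π s)]

/-- Approximate invariance forces `ψ s` to be almost surjective (take `E` to be the complement of
its range), hence close to a permutation. -/
theorem IsSofic3Semigroup.exists_perm_action {S : Type*} [Semigroup S] (h : IsSofic3Semigroup S)
    (K : Finset S) {ε : ℝ} (hε : 0 < ε) :
    ∃ (X : Type), Finite X ∧ Nonempty X ∧
      ∃ π : S → Equiv.Perm X, IsKEActionSemigroup K ε (fun s => π s) := by
  obtain ⟨X, hX, hXne, ψ, hψ, hinv⟩ := h K (ε / 4) (by positivity)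
  choose π hπ using fun s => exists_perm_ncard_ne_le (ψ s)
  have hclose : ∀ s ∈ K, dHam (ψ s) (π s) ≤ ε / 4 := by
    intro s hs
    have hrange := hinv s hs (range (ψ s))ᶜ
    rw [preimage_compl, preimage_range, compl_univ, Set.ncard_empty, Nat.cast_zero, sub_zero,
      abs_of_nonneg (Nat.cast_nonneg _)] at hrange
    refine le_of_mul_le_mul_right ?_ (Nat.cast_pos.2 (Nat.card_pos (α := X)))
    rw [dHam_mul_card]
    exact (Nat.cast_le.2 (hπ s)).trans hrange
  refine ⟨X, hX, hXne, π, ?_⟩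
  convert hψ.of_dHam_le_perm hclose using 1
  ring

section MetricUltraproduct

variable {I : Type*} (X : I → Type) [∀ i, Finite (X i)]

/-- The congruence on a product of finite symmetric groups whose quotient, for an ultrafilter
`L`, is the metric ultraproduct with respect to the normalized Hamming distance. -/
def hammingCon (L : Filter I) : Con (∀ i, Equiv.Perm (X i)) where
  r g h := ∀ δ > 0, ∀ᶠ i in L, dHam (g i) (h i) ≤ δ
  iseqv :=
    { refl := fun g δ hδ => Eventually.of_forall fun i => (dHam_self _).trans_le hδ.le
      symm := fun hgh δ hδ => (hgh δ hδ).mono fun i hi => (dHam_comm _ _).trans_le hi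
      trans := fun {g h k} hgh hhk δ hδ =>
        ((hgh (δ / 2) (by positivity)).and (hhk (δ / 2) (by positivity))).mono fun i hi => by
          linarith [dHam_triangle (g i) (h i) (k i)] }
  mul' := fun {w x y z} hwx hyz δ hδ =>
    ((hwx (δ / 2) (by positivity)).and (hyz (δ / 2) (by positivity))).mono fun i hi => by
      simp only [Pi.mul_apply, Equiv.Perm.coe_mul]
      linarith [dHam_comp_le (w i) (x i) (y i) (z i)]

/-- Distinct elements of the ultraproduct stay a positive Hamming distance apart on a `U`-large
set of coordinates, which is the weak separation that `isSoficGroup_of_separated` amplifies. -/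
theorem isSoficGroup_hammingCon_quotient [∀ i, Nonempty (X i)] (U : Ultrafilter I) :
    IsSoficGroup (hammingCon X U).Quotient := by
  set c := hammingCon X U
  apply isSoficGroup_of_separated
  intro K
  let rep : c.Quotient → ∀ i, Equiv.Perm (X i) := Quotient.out
  have hrep : ∀ g, (rep g : c.Quotient) = g := Quotient.out_eq
  have hsep : ∀ g h, ∀ᶠ δ in 𝓝[>] (0 : ℝ), g ≠ h → ∀ᶠ i in U, δ ≤ dHam (rep g i) (rep h i) := by
    intro g h
    by_cases hgh : g = h
    · exact Eventually.of_forall fun _ hne => absurd hgh hne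
    obtain ⟨δ, hδ, hfar⟩ : ∃ δ > 0, ¬∀ᶠ i in U, dHam (rep g i) (rep h i) ≤ δ := by
      by_contra! hclose
      exact hgh (by rw [← hrep g, ← hrep h]; exact c.eq.2 hclose)
    filter_upwards [Ioo_mem_nhdsGT hδ] with δ' hδ' _
    exact (Ultrafilter.eventually_not.2 hfar).mono fun i hi => by linarith [hδ'.2, not_le.1 hi]
  -- each `hsep g h` holds for all small `δ > 0`, so finitely many of them hold simultaneously
  obtain ⟨δ, hδ, hδsep⟩ : ∃ δ > 0,
      ∀ g ∈ K, ∀ h ∈ K, g ≠ h → ∀ᶠ i in U, δ ≤ dHam (rep g i) (rep h i) :=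
    (eventually_mem_nhdsWithin.and ((eventually_all_finset K).2 fun g _ =>
      (eventually_all_finset K).2 fun h _ => hsep g h)).exists
  refine ⟨δ, hδ, fun η hη => ?_⟩
  have hmul : ∀ g h, c (rep (g * h)) (rep g * rep h) := fun g h =>
    c.eq.1 (by rw [Con.coe_mul, hrep, hrep, hrep])
  have hone : c (rep 1) 1 := c.eq.1 (by rw [hrep, Con.coe_one])
  obtain ⟨i, hi, hione⟩ := (((eventually_all_finset K).2 fun g hg =>
    (eventually_all_finset K).2 fun h hh =>
      (hmul g h η hη).and (eventually_imp_distrib_left.2 (hδsep g hg h hh))).and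
        (hone η hη)).exists
  refine ⟨X i, inferInstance, inferInstance, fun g => rep g i,
    fun g hg h hh _ => (hi g hg h hh).1, fun _ => hione, fun g hg h hh hgh => (hi g hg h hh).2 hgh⟩

end MetricUltraproduct

theorem IsSofic3Semigroup.exists_injective_mulHom {S : Type u} [Semigroup S]
    (h : IsSofic3Semigroup S) :
    ∃ (G : Type u) (_ : Group G) (f : S →ₙ* G), Injective f ∧ IsSoficGroup G := by
  classical
  choose X hX hXne π hπ using fun i : Finset S × ℕ =>
    h.exists_perm_action i.1 (ε := 1 / (i.2 + 1)) Nat.one_div_pos_of_nat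
  let U := Ultrafilter.of (atTop : Filter (Finset S × ℕ))
  have hev : ∀ (K : Finset S) {δ : ℝ}, 0 < δ →
      ∀ᶠ i in (U : Filter (Finset S × ℕ)), K ⊆ i.1 ∧ 1 / (i.2 + 1 : ℝ) < δ := by
    intro K δ hδ
    obtain ⟨n, hn⟩ := exists_nat_one_div_lt hδ
    exact Ultrafilter.of_le _ ((eventually_ge_atTop (K, n)).mono fun i hi =>
      ⟨hi.1, (Nat.one_div_le_one_div hi.2).trans_lt hn⟩)
  let f : S →ₙ* (hammingCon X U).Quotient :=
    { toFun := fun s => ((fun i => π i s : ∀ i, Equiv.Perm (X i)) : (hammingCon X U).Quotient)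
      map_mul' := fun s t => by
        rw [← Con.coe_mul, Con.eq]
        intro δ hδ
        filter_upwards [hev {s, t, s * t} hδ] with i ⟨hK, hi⟩
        exact ((hπ i).1 s (hK (by simp)) t (hK (by simp)) (hK (by simp))).trans hi.le }
  refine ⟨_, inferInstance, f, fun s t hst => ?_, isSoficGroup_hammingCon_quotient X U⟩
  by_contra hne
  obtain ⟨i, hclose, hK, hi⟩ :=
    (((Con.eq _).1 hst (1 / 4) (by norm_num)).and
      (hev {s, t} (by norm_num : (0 : ℝ) < 1 / 4))).exists
  linarith [(hπ i).2 s (hK (by simp)) t (hK (by simp)) hne]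

/-- A semigroup `S` is (3)-sofic if and only if there exist a sofic group `G` and an
injective multiplicative homomorphism `S → G`. -/
theorem sofic3Semigroup_iff_embeds_into_sofic_group {S : Type u} [Semigroup S] :
    IsSofic3Semigroup S ↔
      ∃ (G : Type u) (_ : Group G) (f : S → G),
        Function.Injective f ∧ (∀ a b : S, f (a * b) = f a * f b) ∧ IsSoficGroup G := by
  constructor
  · intro h
    obtain ⟨G, _, f, hf, hG⟩ := h.exists_injective_mulHom
    exact ⟨G, _, f, hf, map_mul f, hG⟩
  · rintro ⟨G, _, f, hf, hmul, hG⟩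
    exact hG.isSofic3Semigroup_of_injective ⟨f, hmul⟩ hf
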